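/- arXiv:2602.08264 — 7 statements merged into one kernel-verified Lean document; each statement's English description precedes it below -/
import Mathlib

section
/- Let p be a prime and M ≥ 1 an integer. For any linear order on the pair set P = {(i,j) : 1 ≤ j ≤ i ≤ M} that refines the partial order given by (i₁,j₁) ≼ (i₂,j₂) iff i₁ ≥ i₂ and j₁ ≤ j₂, the result of running the Serganova algorithm on any (λ,θ) ∈ A using that order equals S₁(λ,θ); in particular S₁(λ,θ) = S₂(λ,θ) for all (λ,θ) ∈ A. -/
open Function

/-- The state of the Serganova algorithm: a pair `(λ, θ) ∈ ℤ^M × ℤ^{M+1}`.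
Indices are 0-based, so the paper's `λ_i` (for `1 ≤ i ≤ M`) is `s.1 ⟨i-1,_⟩`
and the paper's `θ_j` (for `1 ≤ j ≤ M+1`) is `s.2 ⟨j-1,_⟩`. -/
abbrev SState (M : ℕ) := (Fin M → ℤ) × (Fin (M + 1) → ℤ)

/-- One step of the Serganova algorithm, processing the (0-based) pair `(i, j)`:
if `λ_i + θ_j ≡ 0 (mod p)` nothing changes, otherwise `λ_i` is decreased by `1`
and `θ_j` is increased by `1`. -/
def sStep (p M : ℕ) (ij : Fin M × Fin (M + 1)) (s : SState M) : SState M :=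
  if (p : ℤ) ∣ s.1 ij.1 + s.2 ij.2 then s
  else (Function.update s.1 ij.1 (s.1 ij.1 - 1),
        Function.update s.2 ij.2 (s.2 ij.2 + 1))

/-- One step of the inverse algorithm, processing the (0-based) pair `(i, j)`:
if `λ_i + θ_j ≡ 0 (mod p)` nothing changes, otherwise `λ_i` is increased by `1`
and `θ_j` is decreased by `1`. -/
def tStep (p M : ℕ) (ij : Fin M × Fin (M + 1)) (s : SState M) : SState M :=
  if (p : ℤ) ∣ s.1 ij.1 + s.2 ij.2 then s
  else (Function.update s.1 ij.1 (s.1 ij.1 + 1),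
        Function.update s.2 ij.2 (s.2 ij.2 - 1))

/-- Run the Serganova algorithm along a list of pairs. -/
def sRun (p M : ℕ) (l : List (Fin M × Fin (M + 1))) (s : SState M) : SState M :=
  l.foldl (fun s ij => sStep p M ij s) s

/-- Run the inverse algorithm along a list of pairs. -/
def tRun (p M : ℕ) (l : List (Fin M × Fin (M + 1))) (s : SState M) : SState M :=
  l.foldl (fun s ij => tStep p M ij s) s

/-- The Version 1 order on the pair set `P = {(i,j) : 0 ≤ j ≤ i ≤ M-1}` (0-based):
`j` increasing, and for fixed `j`, `i` decreasing from `M-1` down to `j`.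
This is the paper's order `(M,1),(M-1,1),…,(1,1),(M,2),…,(2,2),…,(M,M)`. -/
def order1 (M : ℕ) : List (Fin M × Fin (M + 1)) :=
  (List.finRange M).flatMap fun j =>
    ((List.finRange M).reverse.filter fun i => j ≤ i).map fun i => (i, j.castSucc)

/-- The Version 2 order on the pair set `P` (0-based):
`i` decreasing from `M-1` down to `0`, and for fixed `i`, `j` increasing from `0` to `i`.
This is the paper's order `(M,1),(M,2),…,(M,M),(M-1,1),…,(M-1,M-1),…,(1,1)`. -/
def order2 (M : ℕ) : List (Fin M × Fin (M + 1)) :=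
  (List.finRange M).reverse.flatMap fun i =>
    ((List.finRange M).filter fun j => j ≤ i).map fun j => (i, j.castSucc)

/-- The Serganova map `S₁` (Version 1 order). -/
def S1 (p M : ℕ) (s : SState M) : SState M := sRun p M (order1 M) s

/-- The Serganova map `S₂` (Version 2 order). -/
def S2 (p M : ℕ) (s : SState M) : SState M := sRun p M (order2 M) s

/-- The inverse algorithm `T₁`: inverse steps, pairs processed in reverse Version 1 order. -/
def T1 (p M : ℕ) (s : SState M) : SState M := tRun p M (order1 M).reverse s

/-- The inverse algorithm `T₂`: inverse steps, pairs processed in reverse Version 2 order. -/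
def T2 (p M : ℕ) (s : SState M) : SState M := tRun p M (order2 M).reverse s

/-- The set `A` of dominant pairs: `λ_1 ≥ … ≥ λ_M` and `θ_1 ≥ … ≥ θ_{M+1}`. -/
def domA (M : ℕ) : Set (SState M) := {s | Antitone s.1 ∧ Antitone s.2}

/-- The set `𝕄`: dominant pairs such that (in 1-based terms) for `2 ≤ i ≤ M`,
`λ_{i-1} = λ_i → p ∣ λ_i + θ_i`, and for `1 ≤ i ≤ M`, `θ_i = θ_{i+1} → p ∣ λ_i + θ_i`. -/
def setM (p M : ℕ) : Set (SState M) :=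
  {s | Antitone s.1 ∧ Antitone s.2 ∧
    (∀ (i : ℕ) (hi : i + 1 < M),
      s.1 ⟨i, by omega⟩ = s.1 ⟨i + 1, hi⟩ →
        (p : ℤ) ∣ s.1 ⟨i + 1, hi⟩ + s.2 ⟨i + 1, by omega⟩) ∧
    (∀ (i : ℕ) (hi : i < M),
      s.2 ⟨i, by omega⟩ = s.2 ⟨i + 1, by omega⟩ →
        (p : ℤ) ∣ s.1 ⟨i, hi⟩ + s.2 ⟨i, by omega⟩)}

/-!
Steps at pairs `(i, j)` and `(i', j')` with `i ≠ i'` and `j ≠ j'` read and write disjoint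
coordinates, so they commute. Two pairs that are incomparable for `≼` differ in both
coordinates, hence any two linear extensions of `≼` (such as the Version 1 and Version 2
orders) run the same composite of steps up to swapping commuting neighbours.
-/

section LinearExtension

variable {α β : Type*}

theorem List.foldl_apply_of_commute (f : α → β → β) (a : α) (u : List α)
    (h : ∀ b ∈ u, Function.Commute (f a) (f b)) (s : β) :
    u.foldl (fun s x => f x s) (f a s) = f a (u.foldl (fun s x => f x s) s) := by
  induction u generalizing s with
  | nil => rfl
  | cons b u ih =>
    rw [List.foldl_cons, List.foldl_cons, ← h b List.mem_cons_self s,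
      ih (fun c hc => h c (List.mem_cons_of_mem b hc))]

theorem List.foldl_eq_of_perm_of_pairwise (f : α → β → β) (R : α → α → Prop)
    (hcomm : ∀ a b, ¬ R a b → ¬ R b a → Function.Commute (f a) (f b))
    {l₁ l₂ : List α} (hperm : l₁.Perm l₂)
    (h₁ : l₁.Pairwise fun x y => ¬ R y x) (h₂ : l₂.Pairwise fun x y => ¬ R y x) (s : β) :
    l₁.foldl (fun s x => f x s) s = l₂.foldl (fun s x => f x s) s := by
  induction l₂ generalizing l₁ s with
  | nil => rw [hperm.eq_nil]
  | cons a t ih =>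
    obtain ⟨u, v, rfl⟩ := List.append_of_mem (hperm.mem_iff.mpr List.mem_cons_self)
    rw [List.pairwise_append, List.pairwise_cons] at h₁
    obtain ⟨hu, ⟨-, hv⟩, hcross⟩ := h₁
    rw [List.pairwise_cons] at h₂
    have hperm' : (u ++ v).Perm t := (List.perm_middle.symm.trans hperm).cons_inv
    have hcomm_u : ∀ b ∈ u, Function.Commute (f a) (f b) := by
      intro b hb
      by_cases hba : b = a
      · subst hba; exact Function.Commute.refl _
      have hbt : b ∈ t := (List.mem_cons.mp (hperm.subset (by simp [hb]))).resolve_left hba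
      exact hcomm a b (hcross b hb a List.mem_cons_self) (h₂.1 b hbt)
    have huv : (u ++ v).Pairwise fun x y => ¬ R y x :=
      List.pairwise_append.mpr ⟨hu, hv, fun x hx y hy => hcross x hx y (by simp [hy])⟩
    calc (u ++ a :: v).foldl (fun s x => f x s) s
        = v.foldl (fun s x => f x s) (f a (u.foldl (fun s x => f x s) s)) := by
          simp only [List.foldl_append, List.foldl_cons]
      _ = (u ++ v).foldl (fun s x => f x s) (f a s) := by
          rw [List.foldl_append, List.foldl_apply_of_commute f a u hcomm_u]
      _ = (a :: t).foldl (fun s x => f x s) s := ih hperm' huv h₂.2 (f a s)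

theorem List.pairwise_of_idxOf_lt [BEq α] [LawfulBEq α] (R : α → α → Prop) {l : List α}
    (hl : l.Nodup) (h : ∀ a ∈ l, ∀ b ∈ l, R a b → a ≠ b → l.idxOf a < l.idxOf b) :
    l.Pairwise fun x y => ¬ R y x := by
  rw [List.pairwise_iff_getElem]
  intro i j hi hj hij hR
  have hne : l[j] ≠ l[i] := fun he => hij.ne ((hl.getElem_inj_iff).mp he.symm)
  have := h _ (l.getElem_mem hj) _ (l.getElem_mem hi) hR hne
  rw [hl.idxOf_getElem, hl.idxOf_getElem] at this
  omega

theorem List.Pairwise.nodup_of_refl {R : α → α → Prop} {l : List α}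
    (h : l.Pairwise fun x y => ¬ R y x) (hR : ∀ a, R a a) : l.Nodup :=
  h.imp fun {x _} hxy => by rintro rfl; exact hxy (hR x)

end LinearExtension

/-- The paper's partial order `≼` on pairs, in 0-based indices. -/
def pairLE (M : ℕ) (a b : Fin M × Fin (M + 1)) : Prop := b.1 ≤ a.1 ∧ a.2 ≤ b.2

theorem pairLE_refl (M : ℕ) (a : Fin M × Fin (M + 1)) : pairLE M a a := ⟨le_rfl, le_rfl⟩

theorem sStep_commute (p M : ℕ) {a b : Fin M × Fin (M + 1)} (h₁ : a.1 ≠ b.1) (h₂ : a.2 ≠ b.2) :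
    Function.Commute (sStep p M a) (sStep p M b) := by
  intro s
  unfold sStep
  by_cases hb : (p : ℤ) ∣ s.1 b.1 + s.2 b.2 <;> by_cases ha : (p : ℤ) ∣ s.1 a.1 + s.2 a.2 <;>
    simp [hb, ha, Function.update_of_ne h₁, Function.update_of_ne h₂, Function.update_of_ne h₁.symm,
      Function.update_of_ne h₂.symm, Function.update_comm h₁, Function.update_comm h₂]

theorem sStep_commute_of_not_pairLE (p M : ℕ) {a b : Fin M × Fin (M + 1)}
    (hab : ¬ pairLE M a b) (hba : ¬ pairLE M b a) :
    Function.Commute (sStep p M a) (sStep p M b) := by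
  simp only [pairLE, not_and_or, Fin.not_le] at hab hba
  refine sStep_commute p M (fun h => ?_) (fun h => ?_) <;>
    simp only [h, lt_self_iff_false, false_or, or_false] at hab hba <;>
    exact lt_asymm hab hba

theorem sRun_eq_of_perm (p M : ℕ) {l₁ l₂ : List (Fin M × Fin (M + 1))} (hperm : l₁.Perm l₂)
    (h₁ : l₁.Pairwise fun x y => ¬ pairLE M y x) (h₂ : l₂.Pairwise fun x y => ¬ pairLE M y x)
    (s : SState M) : sRun p M l₁ s = sRun p M l₂ s :=
  List.foldl_eq_of_perm_of_pairwise (sStep p M) (pairLE M)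
    (fun _ _ => sStep_commute_of_not_pairLE p M) hperm h₁ h₂ s

theorem mem_order1 (M : ℕ) (x : Fin M × Fin (M + 1)) : x ∈ order1 M ↔ x.2.val ≤ x.1.val := by
  simp only [order1, List.mem_flatMap, List.mem_map, List.mem_filter, List.mem_reverse,
    List.mem_finRange, true_and, decide_eq_true_eq]
  constructor
  · rintro ⟨j, i, hji, rfl⟩
    simpa using hji
  · intro h
    exact ⟨⟨x.2.val, by omega⟩, x.1, by simpa [Fin.le_def] using h, by ext <;> simp⟩

theorem mem_order2 (M : ℕ) (x : Fin M × Fin (M + 1)) : x ∈ order2 M ↔ x.2.val ≤ x.1.val := by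
  simp only [order2, List.mem_flatMap, List.mem_map, List.mem_filter, List.mem_reverse,
    List.mem_finRange, true_and, decide_eq_true_eq]
  constructor
  · rintro ⟨i, j, hji, rfl⟩
    simpa using hji
  · intro h
    exact ⟨x.1, ⟨x.2.val, by omega⟩, by simpa [Fin.le_def] using h, by ext <;> simp⟩

theorem pairwise_order1 (M : ℕ) : (order1 M).Pairwise fun x y => ¬ pairLE M y x := by
  simp only [order1, List.pairwise_flatMap, List.pairwise_map, List.mem_map]
  refine ⟨fun j _ => ?_, (List.pairwise_lt_finRange M).imp ?_⟩
  · refine ((List.pairwise_reverse.mpr (List.pairwise_lt_finRange M)).sublist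
      List.filter_sublist).imp ?_
    rintro i₁ i₂ h ⟨hle, -⟩
    exact absurd hle (not_le.mpr h)
  · rintro j₁ j₂ h - ⟨i₁, -, rfl⟩ - ⟨i₂, -, rfl⟩ ⟨-, hle⟩
    exact absurd hle (by simpa using h)

theorem pairwise_order2 (M : ℕ) : (order2 M).Pairwise fun x y => ¬ pairLE M y x := by
  simp only [order2, List.pairwise_flatMap, List.pairwise_map, List.mem_map]
  refine ⟨fun i _ => ?_, (List.pairwise_reverse.mpr (List.pairwise_lt_finRange M)).imp ?_⟩
  · refine ((List.pairwise_lt_finRange M).sublist List.filter_sublist).imp ?_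
    rintro j₁ j₂ h ⟨-, hle⟩
    exact absurd hle (by simpa using h)
  · rintro i₁ i₂ h - ⟨j₁, -, rfl⟩ - ⟨j₂, -, rfl⟩ ⟨hle, -⟩
    exact absurd hle (not_le.mpr h)

theorem nodup_order1 (M : ℕ) : (order1 M).Nodup :=
  (pairwise_order1 M).nodup_of_refl (pairLE_refl M)

theorem order2_perm_order1 (M : ℕ) : (order2 M).Perm (order1 M) := by
  rw [List.perm_ext_iff_of_nodup ((pairwise_order2 M).nodup_of_refl (pairLE_refl M))
    (nodup_order1 M)]
  intro x
  rw [mem_order1, mem_order2]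

theorem serganova_order_independence_general (p M : ℕ) :
    (∀ l : List (Fin M × Fin (M + 1)), l.Perm (order1 M) →
      (∀ a b : Fin M × Fin (M + 1), a ∈ l → b ∈ l →
        b.1 ≤ a.1 → a.2 ≤ b.2 → a ≠ b → l.idxOf a < l.idxOf b) →
      ∀ s ∈ domA M, sRun p M l s = S1 p M s) ∧
    (∀ s ∈ domA M, S1 p M s = S2 p M s) := by
  refine ⟨fun l hperm hidx s _ => ?_, fun s _ => ?_⟩
  · have hl : l.Pairwise fun x y => ¬ pairLE M y x :=
      List.pairwise_of_idxOf_lt (pairLE M)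
        ((nodup_order1 M).perm hperm.symm)
        fun a ha b hb ⟨h₁, h₂⟩ => hidx a b ha hb h₁ h₂
    exact sRun_eq_of_perm p M hperm hl (pairwise_order1 M) s
  · exact sRun_eq_of_perm p M (order2_perm_order1 M).symm (pairwise_order1 M)
      (pairwise_order2 M) s

/-- Running the Serganova algorithm along any linear order on `P`
refining the partial order `(i₁,j₁) ≼ (i₂,j₂) ↔ i₁ ≥ i₂ ∧ j₁ ≤ j₂` gives the same
result as `S₁` on dominant pairs; in particular `S₁ = S₂` on `A`. -/
theorem serganova_order_independence (p M : ℕ) (hp : p.Prime) (hM : 1 ≤ M) :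
    (∀ l : List (Fin M × Fin (M + 1)), l.Perm (order1 M) →
      (∀ a b : Fin M × Fin (M + 1), a ∈ l → b ∈ l →
        b.1 ≤ a.1 → a.2 ≤ b.2 → a ≠ b → l.idxOf a < l.idxOf b) →
      ∀ s ∈ domA M, sRun p M l s = S1 p M s) ∧
    (∀ s ∈ domA M, S1 p M s = S2 p M s) :=
  serganova_order_independence_general p M
end

section
/- Let p be a prime and M ≥ 1 an integer. Then S₁(A) ⊆ 𝕄: for every dominant pair (λ,θ) ∈ A, the output (λ̃,θ̃) = S₁(λ,θ) satisfies λ̃_1 ≥ … ≥ λ̃_M, θ̃_1 ≥ … ≥ θ̃_{M+1}, and the congruence conditions: λ̃_{i−1} = λ̃_i implies λ̃_i + θ̃_i ≡ 0 (mod p), and θ̃_i = θ̃_{i+1} implies λ̃_i + θ̃_i ≡ 0 (mod p). -/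
open Function

/-!
Column `j` of the algorithm sweeps the rows `M, …, j` from the top down. If row `i + 1` has just
stayed put, it rests at a multiple of `p`; were it level with row `i`, the step at row `i` would
rest too. Hence the rows stay weakly decreasing, and the last row of each column either drops
strictly below the row above it or rests at a multiple of `p`, which gives the condition on `λ̃`.
For `θ̃`, column `j + 1` sweeps the rows below row `j` as column `j` left them, and a step-by-step
comparison shows that it raises `θ_{j+1}` no further than column `j` raised `θ_j` before its
diagonal step; that diagonal step either lifts `θ_j` strictly above `θ̃_{j+1}` or rests at a
multiple of `p`.
-/

lemma List.filter_le_range (j M : ℕ) :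
    (List.range M).filter (fun i ↦ j ≤ i) = List.range' j (M - j) := by
  rcases le_total j M with h | h
  · obtain ⟨d, rfl⟩ := Nat.exists_eq_add_of_le h
    rw [List.range_eq_range', ← List.range'_append_1, List.filter_append,
      List.filter_eq_nil_iff.2, List.filter_eq_self.2] <;> simp +contextual [List.mem_range']
  · rw [List.filter_eq_nil_iff.2, Nat.sub_eq_zero_of_le h] <;> simp; omega

namespace Serganova

-- `SState M` embeds into this by zero extension (`extend`), so that indices are plain naturals.
abbrev State := (ℕ → ℤ) × (ℕ → ℤ)

def step (p i k : ℕ) (s : State) : State :=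
  if (p : ℤ) ∣ s.1 i + s.2 k then s
  else (update s.1 i (s.1 i - 1), update s.2 k (s.2 k + 1))

/-- Column `k`, rows `lo + n - 1` down to `lo`. -/
def sweep (p k : ℕ) : ℕ → ℕ → State → State
  | _, 0, s => s
  | lo, n + 1, s => step p lo k (sweep p k (lo + 1) n s)

/-- The first `j` columns of the Version 1 order. -/
def run (p M : ℕ) : ℕ → State → State
  | 0, s => s
  | j + 1, s => sweep p j j (M - j) (run p M j s)

section Step

variable {p i k a : ℕ} {s : State}

lemma step_of_dvd (h : (p : ℤ) ∣ s.1 i + s.2 k) : step p i k s = s := if_pos h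

lemma step_fst_self_of_not_dvd (h : ¬(p : ℤ) ∣ s.1 i + s.2 k) :
    (step p i k s).1 i = s.1 i - 1 := by
  simp [step, h]

lemma step_snd_self_of_not_dvd (h : ¬(p : ℤ) ∣ s.1 i + s.2 k) :
    (step p i k s).2 k = s.2 k + 1 := by
  simp [step, h]

lemma step_fst_of_ne (h : a ≠ i) : (step p i k s).1 a = s.1 a := by
  unfold step; split_ifs <;> simp [h]

lemma step_snd_of_ne (h : a ≠ k) : (step p i k s).2 a = s.2 a := by
  unfold step; split_ifs <;> simp [h]

lemma step_fst_le : (step p i k s).1 a ≤ s.1 a := by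
  unfold step; split_ifs
  · rfl
  · rcases eq_or_ne a i with rfl | h <;> simp [*]

lemma le_step_snd : s.2 a ≤ (step p i k s).2 a := by
  unfold step; split_ifs
  · rfl
  · rcases eq_or_ne a k with rfl | h <;> simp [*]

lemma step_snd_self_le : (step p i k s).2 k ≤ s.2 k + 1 := by
  unfold step; split_ifs <;> simp

/-- If the first step rests, the second one sees the same row value, and rests as well when its
column entry has caught up. -/
lemma step_snd_le_step_snd {k' : ℕ} {s' : State} (hfst : s'.1 i = (step p i k s).1 i)
    (hsnd : s'.2 k' ≤ s.2 k) : (step p i k' s').2 k' ≤ (step p i k s).2 k := by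
  by_cases hd : (p : ℤ) ∣ s.1 i + s.2 k
  · rw [step_of_dvd hd] at hfst ⊢
    rcases hsnd.lt_or_eq with hlt | heq
    · linarith [step_snd_self_le (p := p) (i := i) (k := k') (s := s')]
    · rw [step_of_dvd (by rwa [hfst, heq]), heq]
  · linarith [step_snd_self_of_not_dvd hd, step_snd_self_le (p := p) (i := i) (k := k') (s := s')]

end Step

section Sweep

variable {p k lo n a : ℕ} {s : State}

lemma sweep_fst_of_lt (h : a < lo) : (sweep p k lo n s).1 a = s.1 a := by
  induction n generalizing lo with
  | zero => rfl
  | succ n ih => rw [sweep, step_fst_of_ne h.ne, ih (by omega)]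

lemma sweep_snd_of_ne (h : a ≠ k) : (sweep p k lo n s).2 a = s.2 a := by
  induction n generalizing lo with
  | zero => rfl
  | succ n ih => rw [sweep, step_snd_of_ne h, ih]

lemma sweep_fst_le : (sweep p k lo n s).1 a ≤ s.1 a := by
  induction n generalizing lo with
  | zero => rfl
  | succ n ih => exact step_fst_le.trans ih

lemma sweep_fst_lt_or_dvd (hn : 0 < n) :
    (sweep p k lo n s).1 lo < s.1 lo ∨
      (p : ℤ) ∣ (sweep p k lo n s).1 lo + (sweep p k lo n s).2 k := by
  obtain ⟨n, rfl⟩ := Nat.exists_eq_add_of_lt hn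
  set u := sweep p k (lo + 1) n s
  have hu : u.1 lo = s.1 lo := sweep_fst_of_lt (by omega)
  simp only [zero_add, sweep]
  by_cases hd : (p : ℤ) ∣ u.1 lo + u.2 k
  · rw [step_of_dvd hd]; exact .inr hd
  · left; rw [step_fst_self_of_not_dvd hd, hu]; omega

lemma sweep_fst_antitone (hs : ∀ a, lo ≤ a → a + 1 < lo + n → s.1 (a + 1) ≤ s.1 a) :
    ∀ a, lo ≤ a → a + 1 < lo + n → (sweep p k lo n s).1 (a + 1) ≤ (sweep p k lo n s).1 a := by
  induction n generalizing lo with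
  | zero => intro a _ _; omega
  | succ n ih =>
    intro a ha han
    set u := sweep p k (lo + 1) n s
    change (step p lo k u).1 (a + 1) ≤ (step p lo k u).1 a
    rcases ha.lt_or_eq with hlt | rfl
    · rw [step_fst_of_ne (by omega), step_fst_of_ne (by omega)]
      exact ih (fun b hb hbn ↦ hs b (by omega) (by omega)) a hlt (by omega)
    rw [step_fst_of_ne (by omega)]
    have hlo : u.1 lo = s.1 lo := sweep_fst_of_lt (by omega)
    have hle : u.1 (lo + 1) ≤ s.1 lo := sweep_fst_le.trans (hs lo le_rfl han)
    by_cases hd : (p : ℤ) ∣ u.1 lo + u.2 k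
    · rw [step_of_dvd hd, hlo]; exact hle
    rw [step_fst_self_of_not_dvd hd, hlo]
    -- row `lo + 1` has either dropped, or rests at a multiple of `p` and hence differs from
    -- row `lo`, whose step does not rest
    have hrest : u.1 (lo + 1) < s.1 (lo + 1) ∨ (p : ℤ) ∣ u.1 (lo + 1) + u.2 k :=
      sweep_fst_lt_or_dvd (by omega)
    rcases hrest with hlt | hdvd
    · have := hs lo le_rfl han; omega
    · rcases hle.lt_or_eq with hlt | heq
      · omega
      · exact absurd (by rwa [hlo, ← heq]) hd

lemma sweep_snd_le_sweep_snd {k' : ℕ} {s' : State}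
    (hfst : ∀ a, lo ≤ a → a < lo + n → s'.1 a = (sweep p k lo n s).1 a)
    (hsnd : s'.2 k' ≤ s.2 k) : (sweep p k' lo n s').2 k' ≤ (sweep p k lo n s).2 k := by
  induction n generalizing lo with
  | zero => exact hsnd
  | succ n ih =>
    refine step_snd_le_step_snd ?_ (ih fun a ha han ↦ ?_)
    · rw [sweep_fst_of_lt (by omega)]; exact hfst lo le_rfl (by omega)
    · rw [hfst a (by omega) (by omega), sweep, step_fst_of_ne (by omega)]

end Sweep

section Run

variable {p M i j a J : ℕ} {s : State}

lemma run_succ_of_lt (h : j < M) :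
    run p M (j + 1) s = step p j j (sweep p j (j + 1) (M - (j + 1)) (run p M j s)) := by
  rw [run, show M - j = M - (j + 1) + 1 by omega, sweep]

lemma run_self_succ : run p M (M + 1) s = run p M M s := by
  rw [run, Nat.sub_self, sweep]

lemma run_fst_of_lt (h : a < J) : (run p M J s).1 a = (run p M (a + 1) s).1 a := by
  induction J, h using Nat.le_induction with
  | base => rfl
  | succ J hJ ih => rw [run, sweep_fst_of_lt (by omega), ih]

lemma run_snd_of_lt (h : a < J) : (run p M J s).2 a = (run p M (a + 1) s).2 a := by
  induction J, h using Nat.le_induction with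
  | base => rfl
  | succ J hJ ih => rw [run, sweep_snd_of_ne (by omega), ih]

lemma run_snd_of_le (h : j ≤ a) : (run p M j s).2 a = s.2 a := by
  induction j with
  | zero => rfl
  | succ j ih => rw [run, sweep_snd_of_ne (by omega), ih (by omega)]

lemma run_fst_le_of_le (h : j ≤ J) : (run p M J s).1 a ≤ (run p M j s).1 a := by
  induction J, h using Nat.le_induction with
  | base => rfl
  | succ J hJ ih => exact sweep_fst_le.trans ih

lemma run_fst_antitone (hs : ∀ a, a + 1 < M → s.1 (a + 1) ≤ s.1 a) :
    ∀ a, j ≤ a + 1 → a + 1 < M → (run p M j s).1 (a + 1) ≤ (run p M j s).1 a := by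
  induction j with
  | zero => exact fun a _ => hs a
  | succ j ih =>
    exact fun a ha haM ↦
      sweep_fst_antitone (fun b hb hbM ↦ ih b (by omega) (by omega)) a (by omega) (by omega)

lemma run_fst_succ_le (hs : ∀ a, a + 1 < M → s.1 (a + 1) ≤ s.1 a) (ha : a + 1 < M) :
    (run p M M s).1 (a + 1) ≤ (run p M M s).1 a :=
  calc (run p M M s).1 (a + 1) ≤ (run p M (a + 1) s).1 (a + 1) := run_fst_le_of_le ha.le
    _ ≤ (run p M (a + 1) s).1 a := run_fst_antitone hs a le_rfl ha
    _ = (run p M M s).1 a := (run_fst_of_lt (by omega)).symm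

/-- Column `j + 1` sweeps the rows `> j` exactly as column `j` left them. -/
lemma run_snd_succ_le_sweep (hs : ∀ a, a < M → s.2 (a + 1) ≤ s.2 a) (hj : j < M) :
    (run p M M s).2 (j + 1) ≤ (sweep p j (j + 1) (M - (j + 1)) (run p M j s)).2 j := by
  rw [← run_self_succ, run_snd_of_lt (by omega)]
  refine sweep_snd_le_sweep_snd (fun a ha _ ↦ ?_) ?_
  · rw [run_succ_of_lt hj, step_fst_of_ne (by omega)]
  · rw [run_snd_of_le le_rfl, run_snd_of_le le_rfl]
    exact hs j hj

lemma run_snd_succ_le (hs : ∀ a, a < M → s.2 (a + 1) ≤ s.2 a) (hj : j < M) :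
    (run p M M s).2 (j + 1) ≤ (run p M M s).2 j :=
  calc (run p M M s).2 (j + 1) ≤ (sweep p j (j + 1) (M - (j + 1)) (run p M j s)).2 j :=
        run_snd_succ_le_sweep hs hj
    _ ≤ (run p M (j + 1) s).2 j := by rw [run_succ_of_lt hj]; exact le_step_snd
    _ = (run p M M s).2 j := (run_snd_of_lt hj).symm

lemma dvd_of_run_fst_eq (hs : ∀ a, a + 1 < M → s.1 (a + 1) ≤ s.1 a) (hi : i + 1 < M)
    (heq : (run p M M s).1 i = (run p M M s).1 (i + 1)) :
    (p : ℤ) ∣ (run p M M s).1 (i + 1) + (run p M M s).2 (i + 1) := by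
  rw [run_fst_of_lt (by omega), run_fst_of_lt hi] at heq
  rw [run_fst_of_lt hi, run_snd_of_lt hi]
  have hrow : (run p M (i + 1) s).1 (i + 1) ≤ (run p M (i + 1) s).1 i :=
    run_fst_antitone hs i le_rfl hi
  have hrest : (run p M (i + 1 + 1) s).1 (i + 1) < (run p M (i + 1) s).1 (i + 1) ∨
      (p : ℤ) ∣ (run p M (i + 1 + 1) s).1 (i + 1) + (run p M (i + 1 + 1) s).2 (i + 1) :=
    sweep_fst_lt_or_dvd (by omega)
  rcases hrest with hlt | hd
  · omega
  · exact hd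

lemma dvd_of_run_snd_eq (hs : ∀ a, a < M → s.2 (a + 1) ≤ s.2 a) (hj : j < M)
    (heq : (run p M M s).2 j = (run p M M s).2 (j + 1)) :
    (p : ℤ) ∣ (run p M M s).1 j + (run p M M s).2 j := by
  have hle := run_snd_succ_le_sweep (p := p) hs hj
  rw [run_snd_of_lt hj, run_succ_of_lt hj] at heq
  rw [run_fst_of_lt hj, run_snd_of_lt hj, run_succ_of_lt hj]
  set w := sweep p j (j + 1) (M - (j + 1)) (run p M j s)
  by_cases hd : (p : ℤ) ∣ w.1 j + w.2 j
  · rwa [step_of_dvd hd]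
  · rw [step_snd_self_of_not_dvd hd] at heq
    omega

end Run

section Transfer

def steps (p : ℕ) (l : List (ℕ × ℕ)) (s : State) : State :=
  l.foldl (fun u ij ↦ step p ij.1 ij.2 u) s

lemma sweep_eq_steps (p k lo n : ℕ) (s : State) :
    sweep p k lo n s = steps p ((List.range' lo n).reverse.map fun i ↦ (i, k)) s := by
  induction n generalizing lo with
  | zero => rfl
  | succ n ih =>
    simp only [sweep, ih, steps, List.range'_succ, List.reverse_cons, List.map_append,
      List.foldl_append]
    rfl

lemma run_eq_steps (p M J : ℕ) (s : State) :
    run p M J s =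
      steps p ((List.range J).flatMap fun j ↦ (List.range' j (M - j)).reverse.map fun i ↦ (i, j))
        s := by
  induction J with
  | zero => rfl
  | succ J ih =>
    rw [run, ih, sweep_eq_steps, List.range_succ, List.flatMap_append, List.flatMap_singleton,
      steps, steps, steps, List.foldl_append]

variable {p M : ℕ}

lemma order1_map_val :
    (order1 M).map (fun ij ↦ ((ij.1 : ℕ), (ij.2 : ℕ))) =
      (List.range M).flatMap fun j ↦ (List.range' j (M - j)).reverse.map fun i ↦ (i, j) := by
  rw [order1, List.map_flatMap, ← List.map_coe_finRange_eq_range, List.flatMap_map]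
  congr 1
  funext j
  simp only [← List.filter_le_range, ← List.map_coe_finRange_eq_range, List.filter_map,
    List.filter_reverse, List.map_reverse, List.map_map]
  rfl

def extend (s : SState M) : State :=
  (fun i ↦ if h : i < M then s.1 ⟨i, h⟩ else 0, fun j ↦ if h : j < M + 1 then s.2 ⟨j, h⟩ else 0)

lemma extend_fst {s : SState M} {i : ℕ} (h : i < M) : (extend s).1 i = s.1 ⟨i, h⟩ := dif_pos h

lemma extend_snd {s : SState M} {j : ℕ} (h : j < M + 1) : (extend s).2 j = s.2 ⟨j, h⟩ :=
  dif_pos h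

lemma extend_sStep (ij : Fin M × Fin (M + 1)) (s : SState M) :
    extend (sStep p M ij s) = step p ij.1 ij.2 (extend s) := by
  obtain ⟨i, j⟩ := ij
  simp only [sStep, step, extend_fst i.2, extend_snd j.2]
  split_ifs
  · rfl
  · have := j.2
    ext a <;> simp only [extend, update_apply, Fin.ext_iff] <;> split_ifs <;> simp_all

lemma extend_sRun (l : List (Fin M × Fin (M + 1))) (s : SState M) :
    extend (sRun p M l s) = steps p (l.map fun ij ↦ ((ij.1 : ℕ), (ij.2 : ℕ))) (extend s) := by
  induction l generalizing s with
  | nil => rfl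
  | cons ij l ih => rw [sRun, List.foldl_cons, ← sRun, ih, extend_sStep]; rfl

lemma extend_S1 (s : SState M) : extend (S1 p M s) = run p M M (extend s) := by
  rw [S1, extend_sRun, order1_map_val, run_eq_steps]

lemma antitone_iff_of_extension {n : ℕ} {f : Fin n → ℤ} {g : ℕ → ℤ}
    (hg : ∀ i (h : i < n), g i = f ⟨i, h⟩) :
    Antitone f ↔ ∀ a, a + 1 < n → g (a + 1) ≤ g a := by
  refine ⟨fun hf a ha ↦ ?_, fun h a b hab ↦ ?_⟩
  · rw [hg _ ha, hg a (by omega)]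
    exact hf (show a ≤ a + 1 by omega)
  · have := antitoneOn_of_add_one_le Set.ordConnected_Iio (fun a _ _ ha ↦ h a ha) a.2 b.2 hab
    rwa [hg _ a.2, hg _ b.2] at this

end Transfer

end Serganova

open Serganova in
theorem serganova_image_subset_general (p M : ℕ) :
    ∀ s ∈ domA M, S1 p M s ∈ setM p M := by
  rintro s ⟨hfst, hsnd⟩
  rw [antitone_iff_of_extension fun _ ↦ extend_fst] at hfst
  rw [antitone_iff_of_extension fun _ ↦ extend_snd] at hsnd
  simp only [add_lt_add_iff_right] at hsnd
  have key := extend_S1 (p := p) s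
  refine ⟨(antitone_iff_of_extension fun _ ↦ extend_fst).2 fun a ha ↦ ?_,
    (antitone_iff_of_extension fun _ ↦ extend_snd).2 fun a ha ↦ ?_,
    fun i hi heq ↦ ?_, fun i hi heq ↦ ?_⟩
  · rw [key]; exact run_fst_succ_le hfst ha
  · rw [key]; exact run_snd_succ_le hsnd (by omega)
  · have h := dvd_of_run_fst_eq hfst hi (by rw [← key, extend_fst, extend_fst]; exact heq)
    rwa [← key, extend_fst hi, extend_snd] at h
  · have h := dvd_of_run_snd_eq hsnd hi (by rw [← key, extend_snd, extend_snd]; exact heq)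
    rwa [← key, extend_fst hi, extend_snd] at h

/-- `S₁(A) ⊆ 𝕄`. -/
theorem serganova_image_subset (p M : ℕ) (hp : p.Prime) (hM : 1 ≤ M) :
    ∀ s ∈ domA M, S1 p M s ∈ setM p M :=
  serganova_image_subset_general p M
end

section
/- Let p be a prime and M ≥ 1 an integer. Then 𝕄 ⊆ S₁(A): every pair (λ̃,θ̃) ∈ 𝕄 can be obtained as S₁(λ,θ) for some dominant pair (λ,θ) ∈ A. -/
/-!
Let `T₁` run the inverse steps along the reversed order. An inverse step does not change the
tested sum `λ_i + θ_j`, so the forward step undoes it and `S₁ ∘ T₁ = id`; it remains to show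
that `T₁` maps `𝕄` into `A`.

`T₁` sweeps the columns `j = M, …, 1`, column `j` carrying a running value of `θ_j` down
`λ_j, …, λ_M`. A sweep keeps a decreasing list decreasing, and a sweep started from a larger
value over the output of a sweep started from a smaller one ends at a larger value. So
dominance can only fail where `λ_{j-1} = λ_j` and `λ_j` is raised by column `j`, or where
`θ_j = θ_{j+1}` and `θ_j` is lowered at `λ_j`; the conditions defining `𝕄` exclude exactly these.
-/

open Function

section ListModel

variable (p : ℕ)

/-- The sweep of one column by the inverse algorithm: the running value `t` of `θ_j` meets the
entries `λ_j, λ_{j+1}, …, λ_M` in turn; the result is the final `θ_j` and the new entries. -/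
def invColumn : ℤ → List ℤ → ℤ × List ℤ
  | t, [] => (t, [])
  | t, x :: xs =>
    if (p : ℤ) ∣ x + t then ((invColumn t xs).1, x :: (invColumn t xs).2)
    else ((invColumn (t - 1) xs).1, (x + 1) :: (invColumn (t - 1) xs).2)

@[simp]
lemma invColumn_nil (t : ℤ) : invColumn p t [] = (t, []) := rfl

lemma invColumn_cons_of_dvd {x t : ℤ} (xs : List ℤ) (h : (p : ℤ) ∣ x + t) :
    invColumn p t (x :: xs) = ((invColumn p t xs).1, x :: (invColumn p t xs).2) := by
  simp [invColumn, h]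

lemma invColumn_cons_of_not_dvd {x t : ℤ} (xs : List ℤ) (h : ¬(p : ℤ) ∣ x + t) :
    invColumn p t (x :: xs) =
      ((invColumn p (t - 1) xs).1, (x + 1) :: (invColumn p (t - 1) xs).2) := by
  simp [invColumn, h]

lemma invColumn_snd_head_le {x t : ℤ} {xs : List ℤ}
    (h : ∀ y ∈ xs.head?, y ≤ x ∧ (x = y → (p : ℤ) ∣ y + t)) :
    ∀ y ∈ (invColumn p t xs).2.head?, y ≤ x := by
  cases xs with
  | nil => simp
  | cons y ys =>
    obtain ⟨hyx, hdvd⟩ := h y rfl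
    by_cases hy : (p : ℤ) ∣ y + t
    · simp [invColumn_cons_of_dvd p _ hy, hyx]
    · have : y ≠ x := fun hxy => hy (hdvd hxy.symm)
      simp only [invColumn_cons_of_not_dvd p _ hy, List.head?_cons, Option.mem_def,
        Option.some.injEq, forall_eq']
      omega

lemma isChain_invColumn_snd : ∀ {xs : List ℤ} (t : ℤ), xs.IsChain (· ≥ ·) →
    (invColumn p t xs).2.IsChain (· ≥ ·)
  | [], _, _ => List.isChain_nil
  | x :: xs, t, hc => by
    obtain ⟨hhead, htail⟩ := List.isChain_cons.mp hc
    by_cases hx : (p : ℤ) ∣ x + t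
    · rw [invColumn_cons_of_dvd p _ hx]
      refine List.isChain_cons.mpr ⟨invColumn_snd_head_le p fun y hy => ?_,
        isChain_invColumn_snd t htail⟩
      exact ⟨hhead y hy, fun hxy => hxy ▸ hx⟩
    · rw [invColumn_cons_of_not_dvd p _ hx]
      refine List.isChain_cons.mpr ⟨invColumn_snd_head_le p fun y hy => ?_,
        isChain_invColumn_snd (t - 1) htail⟩
      have := hhead y hy
      exact ⟨by omega, by omega⟩

/-- The gap `t₁ - t₀` shrinks only at an entry where the first sweep skips and the second one
steps; both then test the same entry, so this needs `t₀ ≠ t₁`. -/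
lemma invColumn_fst_le_invColumn_fst_snd : ∀ (xs : List ℤ) {t₀ t₁ : ℤ}, t₀ ≤ t₁ →
    (invColumn p t₀ xs).1 ≤ (invColumn p t₁ (invColumn p t₀ xs).2).1
  | [], _, _, h => h
  | x :: xs, t₀, t₁, h => by
    by_cases h₀ : (p : ℤ) ∣ x + t₀
    · rw [invColumn_cons_of_dvd p _ h₀]
      by_cases h₁ : (p : ℤ) ∣ x + t₁
      · rw [invColumn_cons_of_dvd p _ h₁]
        exact invColumn_fst_le_invColumn_fst_snd xs h
      · have : t₀ ≠ t₁ := by rintro rfl; exact h₁ h₀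
        rw [invColumn_cons_of_not_dvd p _ h₁]
        exact invColumn_fst_le_invColumn_fst_snd xs (by omega)
    · rw [invColumn_cons_of_not_dvd p _ h₀]
      by_cases h₁ : (p : ℤ) ∣ x + 1 + t₁
      · rw [invColumn_cons_of_dvd p _ h₁]
        exact invColumn_fst_le_invColumn_fst_snd xs (by omega)
      · rw [invColumn_cons_of_not_dvd p _ h₁]
        exact invColumn_fst_le_invColumn_fst_snd xs (by omega)

lemma invColumn_fst_le_invColumn_fst_cons {x t t₂ : ℤ} (xs : List ℤ) (ht : t₂ ≤ t)
    (hdvd : t = t₂ → (p : ℤ) ∣ x + t) :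
    (invColumn p t₂ xs).1 ≤ (invColumn p t (x :: (invColumn p t₂ xs).2)).1 := by
  by_cases hx : (p : ℤ) ∣ x + t
  · rw [invColumn_cons_of_dvd p _ hx]
    exact invColumn_fst_le_invColumn_fst_snd p xs ht
  · have : t ≠ t₂ := fun h => hx (hdvd h)
    rw [invColumn_cons_of_not_dvd p _ hx]
    exact invColumn_fst_le_invColumn_fst_snd p xs (by omega)

/-- The inverse algorithm on the lists `[λ_1, …, λ_M]`, `[θ_1, …, θ_{M+1}]`: first the columns
`2, …, M` on the tails, then column `1`. -/
def invRun : List ℤ → List ℤ → List ℤ × List ℤ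
  | x :: xs, t :: ts =>
    ((invColumn p t (x :: (invRun xs ts).1)).2,
      (invColumn p t (x :: (invRun xs ts).1)).1 :: (invRun xs ts).2)
  | xs, ts => (xs, ts)

lemma invRun_cons_cons (x t : ℤ) (xs ts : List ℤ) :
    invRun p (x :: xs) (t :: ts) =
      ((invColumn p t (x :: (invRun p xs ts).1)).2,
        (invColumn p t (x :: (invRun p xs ts).1)).1 :: (invRun p xs ts).2) := rfl

lemma exists_invRun_eq_invColumn (xs ts : List ℤ) (t : ℤ) :
    ∃ L : List ℤ, L.head? = xs.head? ∧ (invRun p xs (t :: ts)).1 = (invColumn p t L).2 ∧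
      (invRun p xs (t :: ts)).2.head? = some (invColumn p t L).1 := by
  cases xs with
  | nil => exact ⟨[], rfl, rfl, rfl⟩
  | cons x xs => exact ⟨x :: (invRun p xs ts).1, rfl, rfl, rfl⟩

def IsMList (lam th : List ℤ) : Prop :=
  (∀ i (h : i + 1 < lam.length) (h' : i + 1 < th.length),
    lam[i] = lam[i + 1] → (p : ℤ) ∣ lam[i + 1] + th[i + 1]) ∧
  (∀ i (h : i < lam.length) (h' : i + 1 < th.length),
    th[i] = th[i + 1] → (p : ℤ) ∣ lam[i] + th[i])

lemma IsMList.tail {x t : ℤ} {xs ts : List ℤ} (h : IsMList p (x :: xs) (t :: ts)) :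
    IsMList p xs ts :=
  ⟨fun i h₁ h₂ => h.1 (i + 1) (Nat.succ_lt_succ h₁) (Nat.succ_lt_succ h₂),
    fun i h₁ h₂ => h.2 (i + 1) (Nat.succ_lt_succ h₁) (Nat.succ_lt_succ h₂)⟩

theorem isChain_invRun : ∀ {lam th : List ℤ}, th.length = lam.length + 1 →
    lam.IsChain (· ≥ ·) → th.IsChain (· ≥ ·) → IsMList p lam th →
    (invRun p lam th).1.IsChain (· ≥ ·) ∧ (invRun p lam th).2.IsChain (· ≥ ·)
  | [], _, _, _, hth, _ => ⟨List.isChain_nil, hth⟩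
  | x :: xs, t :: t₂ :: ts, hlen, hlam, hth, hM => by
    obtain ⟨hx, hxs⟩ := List.isChain_cons.mp hlam
    obtain ⟨htt₂, hts⟩ := List.isChain_cons_cons.mp hth
    obtain ⟨C₁, C₂⟩ := isChain_invRun (by simpa using hlen) hxs hts hM.tail
    obtain ⟨L, hL, hR₁, hR₂⟩ := exists_invRun_eq_invColumn p xs ts t₂
    rw [invRun_cons_cons]
    constructor
    · refine isChain_invColumn_snd p t (List.isChain_cons.mpr ⟨?_, C₁⟩)
      rw [hR₁]
      refine invColumn_snd_head_le p fun y hy => ⟨hx y (hL ▸ hy), fun hxy => ?_⟩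
      rw [hL] at hy
      cases xs with
      | nil => simp at hy
      | cons x₂ xs =>
        obtain rfl : x₂ = y := Option.some_injective _ hy
        exact hM.1 0 (by simp) (by simp) hxy
    · refine List.isChain_cons.mpr ⟨?_, C₂⟩
      rw [hR₂, hR₁]
      rintro _ ⟨⟩
      exact invColumn_fst_le_invColumn_fst_cons p L htt₂ (hM.2 0 (by simp) (by simp))

end ListModel

section Algorithm

variable (p : ℕ) {M : ℕ}

lemma sStep_tStep (a : Fin M × Fin (M + 1)) (s : SState M) :
    sStep p M a (tStep p M a s) = s := by
  by_cases h : (p : ℤ) ∣ s.1 a.1 + s.2 a.2 <;> simp [tStep, sStep, h]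

lemma sRun_tRun_reverse (l : List (Fin M × Fin (M + 1))) (s : SState M) :
    sRun p M l (tRun p M l.reverse s) = s := by
  induction l generalizing s with
  | nil => rfl
  | cons a l ih =>
    simp only [sRun, tRun, List.reverse_cons, List.foldl_append, List.foldl_cons,
      List.foldl_nil] at ih ⊢
    rw [sStep_tStep, ih]

lemma S1_T1 (s : SState M) : S1 p M (T1 p M s) = s :=
  sRun_tRun_reverse p (order1 M) s

lemma tRun_cons (a : Fin M × Fin (M + 1)) (l : List (Fin M × Fin (M + 1))) (s : SState M) :
    tRun p M (a :: l) s = tRun p M l (tStep p M a s) := rfl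

lemma tRun_append (l₁ l₂ : List (Fin M × Fin (M + 1))) (s : SState M) :
    tRun p M (l₁ ++ l₂) s = tRun p M l₂ (tRun p M l₁ s) :=
  List.foldl_append

lemma tStep_succ_succ (a : Fin M × Fin (M + 1)) (x t : ℤ) (s : SState M) :
    tStep p (M + 1) (Prod.map Fin.succ Fin.succ a) (Fin.cons x s.1, Fin.cons t s.2) =
      (Fin.cons x (tStep p M a s).1, Fin.cons t (tStep p M a s).2) := by
  by_cases h : (p : ℤ) ∣ s.1 a.1 + s.2 a.2 <;> simp [tStep, h, Fin.cons_update]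

lemma tRun_map_succ_succ (l : List (Fin M × Fin (M + 1))) (x t : ℤ) (s : SState M) :
    tRun p (M + 1) (l.map (Prod.map Fin.succ Fin.succ)) (Fin.cons x s.1, Fin.cons t s.2) =
      (Fin.cons x (tRun p M l s).1, Fin.cons t (tRun p M l s).2) := by
  induction l generalizing s with
  | nil => rfl
  | cons a l ih =>
    rw [List.map_cons, tRun_cons, tRun_cons, tStep_succ_succ, ih]

lemma tRun_column (j : Fin (M + 1)) {L : List (Fin M)} (hL : L.Nodup) (s : SState M) :
    L.map (tRun p M (L.map (·, j)) s).1 = (invColumn p (s.2 j) (L.map s.1)).2 ∧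
      (tRun p M (L.map (·, j)) s).2 = update s.2 j (invColumn p (s.2 j) (L.map s.1)).1 ∧
      ∀ i ∉ L, (tRun p M (L.map (·, j)) s).1 i = s.1 i := by
  induction L generalizing s with
  | nil => simp [tRun]
  | cons i L ih =>
    obtain ⟨hiL, hL⟩ := List.nodup_cons.mp hL
    have hrun : tRun p M ((i :: L).map (·, j)) s = tRun p M (L.map (·, j)) (tStep p M (i, j) s) :=
      rfl
    rw [hrun]
    by_cases h : (p : ℤ) ∣ s.1 i + s.2 j
    · obtain ⟨ih₁, ih₂, ih₃⟩ := ih hL s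
      rw [show tStep p M (i, j) s = s from if_pos h, List.map_cons, List.map_cons,
        invColumn_cons_of_dvd p _ h, ih₁, ih₂, ih₃ i hiL]
      exact ⟨rfl, rfl, fun k hk => ih₃ k fun hkL => hk (List.mem_cons_of_mem _ hkL)⟩
    · set s' : SState M := (update s.1 i (s.1 i + 1), update s.2 j (s.2 j - 1))
      have hmap : L.map s'.1 = L.map s.1 :=
        List.map_congr_left fun k hk => update_of_ne (ne_of_mem_of_not_mem hk hiL) _ _
      obtain ⟨ih₁, ih₂, ih₃⟩ := ih hL s'
      rw [show tStep p M (i, j) s = s' from if_neg h, List.map_cons,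
        List.map_cons, invColumn_cons_of_not_dvd p _ h, ih₁, ih₂, ih₃ i hiL, hmap]
      refine ⟨by simp [s'], by simp [s'], fun k hk => ?_⟩
      rw [ih₃ k fun hkL => hk (List.mem_cons_of_mem _ hkL)]
      exact update_of_ne (List.ne_of_not_mem_cons hk) _ _

lemma order1_succ (M : ℕ) :
    order1 (M + 1) = ((List.finRange (M + 1)).reverse.map (·, 0)) ++
      (order1 M).map (Prod.map Fin.succ Fin.succ) := by
  rw [order1, List.finRange_succ, List.flatMap_cons, order1, List.map_flatMap, List.flatMap_map]
  congr 1
  · simp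
  · congr 1
    funext j
    simp [List.filter_map, Function.comp_def]

lemma T1_cons (x t : ℤ) (s : SState M) :
    T1 p (M + 1) (Fin.cons x s.1, Fin.cons t s.2) =
      tRun p (M + 1) ((List.finRange (M + 1)).map (·, 0))
        (Fin.cons x (T1 p M s).1, Fin.cons t (T1 p M s).2) := by
  simp only [T1, order1_succ, List.reverse_append, ← List.map_reverse, List.reverse_reverse]
  rw [tRun_append, tRun_map_succ_succ]

theorem ofFn_T1 : ∀ {M : ℕ} (s : SState M),
    (List.ofFn (T1 p M s).1, List.ofFn (T1 p M s).2) = invRun p (List.ofFn s.1) (List.ofFn s.2)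
  | 0, s => by simp [T1, order1, tRun, invRun]
  | M + 1, (lam, th) => by
    have hT := T1_cons p (lam 0) (th 0) (Fin.tail lam, Fin.tail th)
    simp only [Fin.cons_self_tail] at hT
    set s' := T1 p M (Fin.tail lam, Fin.tail th)
    have ih : invRun p (List.ofFn fun i => lam i.succ) (List.ofFn fun i => th i.succ) =
        (List.ofFn s'.1, List.ofFn s'.2) := (ofFn_T1 (Fin.tail lam, Fin.tail th)).symm
    obtain ⟨h₁, h₂, -⟩ := tRun_column p 0 (List.nodup_finRange (M + 1))
      (Fin.cons (lam 0) s'.1, Fin.cons (th 0) s'.2)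
    rw [← hT] at h₁ h₂
    simp only [← List.ofFn_eq_map, List.ofFn_succ (f := Fin.cons _ _), Fin.cons_zero,
      Fin.cons_succ, Fin.update_cons_zero] at h₁ h₂
    rw [List.ofFn_succ (f := lam), List.ofFn_succ (f := th), invRun_cons_cons, ih, h₁, h₂,
      List.ofFn_succ]
    rfl

end Algorithm

lemma isChain_ofFn_ge_iff {n : ℕ} (f : Fin n → ℤ) :
    (List.ofFn f).IsChain (· ≥ ·) ↔ Antitone f :=
  List.sortedGE_iff_isChain.symm.trans List.sortedGE_ofFn_iff

lemma isMList_ofFn {p M : ℕ} {s : SState M} (hs : s ∈ setM p M) :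
    IsMList p (List.ofFn s.1) (List.ofFn s.2) :=
  ⟨fun i h _ => by simpa only [List.getElem_ofFn] using hs.2.2.1 i (by simpa using h),
    fun i h _ => by simpa only [List.getElem_ofFn] using hs.2.2.2 i (by simpa using h)⟩

lemma T1_mem_domA {p M : ℕ} {s : SState M} (hs : s ∈ setM p M) : T1 p M s ∈ domA M := by
  have h := isChain_invRun p (by simp) ((isChain_ofFn_ge_iff _).mpr hs.1)
    ((isChain_ofFn_ge_iff _).mpr hs.2.1) (isMList_ofFn hs)
  rw [← ofFn_T1] at h
  exact ⟨(isChain_ofFn_ge_iff _).mp h.1, (isChain_ofFn_ge_iff _).mp h.2⟩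

theorem serganova_image_supset_general (p M : ℕ) :
    setM p M ⊆ S1 p M '' domA M :=
  fun s hs => ⟨T1 p M s, T1_mem_domA hs, S1_T1 p s⟩

/-- `𝕄 ⊆ S₁(A)`. -/
theorem serganova_image_supset (p M : ℕ) (hp : p.Prime) (hM : 1 ≤ M) :
    setM p M ⊆ S1 p M '' domA M :=
  serganova_image_supset_general p M
end

section
/- Let p be a prime and M ≥ 1 an integer, and let (λ,θ) ∈ A. Then at every intermediate stage of the Version 1 Serganova algorithm applied to (λ,θ), the current λ-sequence is nonincreasing: for every k, the sequence λ^{(k)} obtained after the first k steps satisfies λ^{(k)}_1 ≥ λ^{(k)}_2 ≥ … ≥ λ^{(k)}_M. In particular the λ-component of S₁(λ,θ) is nonincreasing. -/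
open Function

/-!
A step at `(i, j)` lowers `λ_i` by one, so it can only break `λ_i ≥ λ_{i+1}` when
`λ_i = λ_{i+1}`. In the Version 1 order the step at `(i, j)` with `i < M` comes right after
the step at `(i + 1, j)`, which involves the same `θ_j`. Either that step was inert, so
`λ_{i+1} + θ_j ≡ 0` and a tie `λ_i = λ_{i+1}` makes the step at `(i, j)` inert as well, or it
lowered `λ_{i+1}` and left `λ_{i+1} < λ_i`. Steps in the last row never break monotonicity.
-/

open List

theorem List.filter_eq_takeWhile_of_isChain {α : Type*} {R : α → α → Prop} {P : α → Bool}
    {l : List α} (hl : l.IsChain R) (hP : ∀ ⦃a b⦄, R a b → P b → P a) :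
    l.filter P = l.takeWhile P := by
  induction hl with
  | nil => rfl
  | singleton a => cases h : P a <;> simp [h]
  | @cons_cons a b l hab _ ih =>
    by_cases ha : P a
    · rw [filter_cons_of_pos ha, takeWhile_cons_of_pos ha, ih]
    · have hb : ¬P b := fun hb => ha (hP hab hb)
      rw [filter_cons_of_neg ha, takeWhile_cons_of_neg ha, ih, takeWhile_cons_of_neg hb]

theorem List.isChain_reverse_finRange (n : ℕ) :
    (finRange n).reverse.IsChain fun a b : Fin n => a.val = b.val + 1 := by
  rw [isChain_reverse, ← isChain_map Fin.val (R := fun x y : ℕ => y = x + 1),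
    map_coe_finRange_eq_range, isChain_range]
  intros
  rfl

theorem List.val_add_one_of_mem_head?_reverse_finRange {n : ℕ} {a : Fin n}
    (ha : a ∈ (finRange n).reverse.head?) : a.val + 1 = n := by
  cases n with
  | zero => exact a.elim0
  | succ n =>
    rw [finRange_succ_last, reverse_append] at ha
    simp only [reverse_cons, reverse_nil, nil_append, cons_append, head?_cons,
      Option.mem_def, Option.some.injEq] at ha
    simp [← ha]

theorem Antitone.update_sub_one {n : ℕ} {f : Fin n → ℤ} (hf : Antitone f) {i : Fin n}
    (hi : ∀ h : i.val + 1 < n, f ⟨i.val + 1, h⟩ < f i) :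
    Antitone (update f i (f i - 1)) := by
  intro x y hxy
  rcases eq_or_ne y i with rfl | hy
  · rcases eq_or_ne x y with rfl | hx
    · rfl
    · rw [update_self, update_of_ne hx]
      linarith [hf hxy]
  · rw [update_of_ne hy]
    rcases eq_or_ne x i with rfl | hx
    · have hxy' : x.val + 1 ≤ y.val := Fin.lt_def.1 (lt_of_le_of_ne hxy hy.symm)
      have hsucc := hi (by omega)
      have := hf (show (⟨x.val + 1, by omega⟩ : Fin n) ≤ y from hxy')
      rw [update_self]
      omega
    · rw [update_of_ne hx]
      exact hf hxy

section Sweep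

variable {p M : ℕ}

/-- Read as "`a` is processed immediately before `b`": unless `b = (i, j)` lies in the last row,
`a` must be `(i + 1, j)`. -/
def ColumnPredecessor (a b : Fin M × Fin (M + 1)) : Prop :=
  b.1.val + 1 < M → a.1.val = b.1.val + 1 ∧ a.2 = b.2

def StepSafe (p : ℕ) (s : SState M) (a : Fin M × Fin (M + 1)) : Prop :=
  ∀ h : a.1.val + 1 < M, s.1 ⟨a.1.val + 1, h⟩ = s.1 a.1 → (p : ℤ) ∣ s.1 a.1 + s.2 a.2

theorem antitone_sStep {s : SState M} {a : Fin M × Fin (M + 1)} (hs : Antitone s.1)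
    (ha : StepSafe p s a) : Antitone (sStep p M a s).1 := by
  unfold sStep
  split_ifs with hdvd
  · exact hs
  · exact hs.update_sub_one fun h =>
      lt_of_le_of_ne (hs (Fin.le_def.2 (Nat.le_succ _))) fun heq => hdvd (ha h heq)

theorem stepSafe_sStep {s : SState M} {a b : Fin M × Fin (M + 1)} (hs : Antitone s.1)
    (hab : ColumnPredecessor a b) : StepSafe p (sStep p M a s) b := by
  intro h heq
  obtain ⟨hi, hj⟩ := hab h
  have ha : a.1 = ⟨b.1.val + 1, h⟩ := Fin.ext hi
  unfold sStep at heq ⊢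
  split_ifs at heq ⊢ with hdvd
  · rwa [← heq, ← hj, ← ha]
  · have hne : b.1 ≠ a.1 := fun h' => by simp [h'] at hi
    have hle : s.1 a.1 ≤ s.1 b.1 := hs (by simp [ha, Fin.le_def])
    simp only [← ha, update_self, update_of_ne hne] at heq
    omega

theorem antitone_sRun_of_isChain {l : List (Fin M × Fin (M + 1))} (hl : l.IsChain ColumnPredecessor)
    {s : SState M} (hs : Antitone s.1) (hhead : ∀ a ∈ l.head?, StepSafe p s a) :
    Antitone (sRun p M l s).1 := by
  induction l generalizing s with
  | nil => exact hs
  | cons a l ih =>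
    exact ih hl.tail (antitone_sStep hs (hhead a rfl)) fun b hb =>
      stepSafe_sStep hs (hl.rel_head? hb)

def IsColumnSweep (l : List (Fin M × Fin (M + 1))) : Prop :=
  l.IsChain ColumnPredecessor ∧ ∀ a ∈ l.head?, a.1.val + 1 = M

theorem IsColumnSweep.antitone_sRun {l : List (Fin M × Fin (M + 1))} (hl : IsColumnSweep l)
    {s : SState M} (hs : Antitone s.1) : Antitone (sRun p M l s).1 :=
  antitone_sRun_of_isChain hl.1 hs fun a ha h => absurd h (by have := hl.2 a ha; omega)

theorem isColumnSweep_nil : IsColumnSweep ([] : List (Fin M × Fin (M + 1))) :=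
  ⟨isChain_nil, by simp⟩

theorem IsColumnSweep.append {l₁ l₂ : List (Fin M × Fin (M + 1))} (h₁ : IsColumnSweep l₁)
    (h₂ : IsColumnSweep l₂) : IsColumnSweep (l₁ ++ l₂) := by
  refine ⟨h₁.1.append h₂.1 fun _ _ b hb hlt => absurd (h₂.2 b hb) (by omega), fun a ha => ?_⟩
  cases l₁ with
  | nil => exact h₂.2 a ha
  | cons b l => exact h₁.2 a ha

theorem isColumnSweep_flatMap {α : Type*} {f : α → List (Fin M × Fin (M + 1))} {L : List α}
    (h : ∀ x ∈ L, IsColumnSweep (f x)) : IsColumnSweep (L.flatMap f) := by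
  induction L with
  | nil => exact isColumnSweep_nil
  | cons x L ih =>
    rw [flatMap_cons]
    exact (h x mem_cons_self).append (ih fun y hy => h y (mem_cons_of_mem x hy))

theorem IsColumnSweep.take {l : List (Fin M × Fin (M + 1))} (hl : IsColumnSweep l) (k : ℕ) :
    IsColumnSweep (l.take k) := by
  refine ⟨hl.1.infix (take_prefix k l).isInfix, fun a ha => hl.2 a ?_⟩
  rw [head?_take] at ha
  split_ifs at ha
  · exact absurd ha (Option.not_mem_none a)
  · exact ha

theorem isColumnSweep_column (j : Fin M) :
    IsColumnSweep (((finRange M).reverse.filter fun i => j ≤ i).map fun i => (i, j.castSucc)) := by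
  have hchain := isChain_reverse_finRange M
  rw [filter_eq_takeWhile_of_isChain hchain fun a b hab hb => by simp at hb ⊢; omega]
  refine ⟨?_, fun a ha => ?_⟩
  · rw [isChain_map]
    exact (hchain.infix (takeWhile_prefix _).isInfix).imp fun _ _ h _ => ⟨h, rfl⟩
  · rw [head?_map, head?_takeWhile, Option.mem_map] at ha
    obtain ⟨i, hi, rfl⟩ := ha
    exact val_add_one_of_mem_head?_reverse_finRange (Option.eq_some_of_filter_eq_some hi)

theorem isColumnSweep_order1 : IsColumnSweep (order1 M) :=
  isColumnSweep_flatMap fun j _ => isColumnSweep_column j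

end Sweep

theorem serganova_v1_lambda_antitone_general (p M : ℕ)
    (s : SState M) (hs : s ∈ domA M) :
    (∀ k : ℕ, Antitone (sRun p M ((order1 M).take k) s).1) ∧
    Antitone (S1 p M s).1 :=
  ⟨fun k => (isColumnSweep_order1.take k).antitone_sRun hs.1,
    isColumnSweep_order1.antitone_sRun hs.1⟩

/-- At every intermediate stage of the Version 1 algorithm applied to a
dominant pair, the current `λ`-sequence is nonincreasing; in particular the `λ`-component
of `S₁(λ,θ)` is nonincreasing. -/
theorem serganova_v1_lambda_antitone (p M : ℕ) (hp : p.Prime) (hM : 1 ≤ M)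
    (s : SState M) (hs : s ∈ domA M) :
    (∀ k : ℕ, Antitone (sRun p M ((order1 M).take k) s).1) ∧
    Antitone (S1 p M s).1 :=
  serganova_v1_lambda_antitone_general p M s hs
end

section
/- Let p be a prime and M ≥ 1 an integer, and let (λ,θ) ∈ A. Then at every intermediate stage of the Version 2 Serganova algorithm applied to (λ,θ), the current θ-sequence is nonincreasing: for every k, the sequence θ^{(k)} obtained after the first k steps satisfies θ^{(k)}_1 ≥ θ^{(k)}_2 ≥ … ≥ θ^{(k)}_{M+1}. In particular the θ-component of S₂(λ,θ) is nonincreasing. -/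
open Function

/-
Within one row `i` the steps only raise entries of `θ`, one unit at a time and in column order
`0, 1, 2, …`. Raising `θ_j` can break antitonicity only if `θ_{j-1} = θ_j`. If the step at
column `j - 1` fired, it raised `θ_{j-1}` strictly above `θ_j`; if it did not fire, then
`p ∣ λ_i + θ_{j-1}`, and a tie `θ_{j-1} = θ_j` makes the step at column `j` idle as well.
Rows are processed one after another, so the invariant `Antitone θ` survives every prefix.
-/

theorem List.foldl_take_flatMap_invariant {α β σ : Type*} (f : σ → β → σ) (P : σ → Prop)
    (g : α → List β) (L : List α)
    (h : ∀ a ∈ L, ∀ (t : ℕ) (s : σ), P s → P (((g a).take t).foldl f s)) :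
    ∀ (k : ℕ) (s : σ), P s → P (((L.flatMap g).take k).foldl f s) := by
  induction L with
  | nil => simp
  | cons a L ih =>
    intro k s hs
    rw [List.flatMap_cons, List.take_append, List.foldl_append]
    exact ih (fun b hb => h b (List.mem_cons_of_mem a hb)) _ _ (h a List.mem_cons_self k s hs)

theorem antitone_update_add_one {ι : Type*} [PartialOrder ι] [DecidableEq ι] {f : ι → ℤ}
    (hf : Antitone f) {j : ι} (hj : ∀ a < j, f j < f a) :
    Antitone (update f j (f j + 1)) := by
  intro a b hab
  rcases eq_or_ne a j with rfl | ha
  · rcases eq_or_ne b a with rfl | hb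
    · exact le_rfl
    · rw [update_self, update_of_ne hb]
      linarith [hf hab]
  · rcases eq_or_ne b j with rfl | hb
    · rw [update_self, update_of_ne ha]
      linarith [hj a (lt_of_le_of_ne hab ha)]
    · rw [update_of_ne ha, update_of_ne hb]
      exact hf hab

theorem List.map_val_filter_le_finRange {M : ℕ} (i : Fin M) :
    ((List.finRange M).filter (· ≤ i)).map Fin.val = List.range (i + 1) := by
  refine List.Pairwise.eq_of_mem_iff (r := (· < ·)) ?_ List.pairwise_lt_range fun n => ?_
  · exact List.pairwise_map.mpr ((List.sortedLT_finRange M).pairwise.filter _)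
  · simp only [List.mem_map, List.mem_filter, List.mem_finRange, true_and, decide_eq_true_eq,
      List.mem_range]
    constructor
    · rintro ⟨j, hj, rfl⟩
      exact Nat.lt_succ_of_le hj
    · intro hn
      exact ⟨⟨n, by omega⟩, Nat.le_of_lt_succ hn, rfl⟩

variable {p M : ℕ}

theorem sRun_append (l₁ l₂ : List (Fin M × Fin (M + 1))) (s : SState M) :
    sRun p M (l₁ ++ l₂) s = sRun p M l₂ (sRun p M l₁ s) :=
  List.foldl_append

def ColumnReady (p : ℕ) (i : Fin M) (j : Fin (M + 1)) (s : SState M) : Prop :=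
  ∀ a < j, s.2 a = s.2 j → (p : ℤ) ∣ s.1 i + s.2 j

theorem columnReady_zero (i : Fin M) (s : SState M) : ColumnReady p i 0 s :=
  fun a ha => absurd ha (Fin.not_lt_zero a)

theorem antitone_sStep_s5 {i : Fin M} {j : Fin (M + 1)} {s : SState M} (hθ : Antitone s.2)
    (hj : ColumnReady p i j s) : Antitone (sStep p M (i, j) s).2 := by
  by_cases hdvd : (p : ℤ) ∣ s.1 i + s.2 j
  · simpa only [sStep, if_pos hdvd] using hθ
  · rw [sStep, if_neg hdvd]
    exact antitone_update_add_one hθ fun a ha =>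
      lt_of_le_of_ne (hθ ha.le) fun he => hdvd (hj a ha he.symm)

theorem columnReady_sStep {i : Fin M} {j j' : Fin (M + 1)} {s : SState M} (hθ : Antitone s.2)
    (hj : ColumnReady p i j s) (hjj' : j ⋖ j') : ColumnReady p i j' (sStep p M (i, j) s) := by
  intro a ha htie
  have haj : a ≤ j := hjj'.le_of_lt ha
  by_cases hdvd : (p : ℤ) ∣ s.1 i + s.2 j
  · simp only [sStep, if_pos hdvd] at htie ⊢
    have : s.2 j = s.2 j' := le_antisymm (htie ▸ hθ haj) (hθ hjj'.le)
    rwa [← this]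
  · exfalso
    have hanti := antitone_sStep_s5 hθ hj
    simp only [sStep, if_neg hdvd] at htie hanti
    have hj_le_a := hanti haj
    rw [update_self] at hj_le_a
    rw [update_of_ne hjj'.ne'] at htie
    linarith [hθ hjj'.le]

theorem antitone_sRun_row_take (i : Fin M) {cols : List (Fin (M + 1))} {n : ℕ}
    (hcols : cols.map Fin.val = List.range n) {s : SState M} (hθ : Antitone s.2) (t : ℕ) :
    Antitone (sRun p M ((cols.map (Prod.mk i)).take t) s).2 := by
  have hlen : cols.length = n := by simpa using congrArg List.length hcols
  have hval : ∀ (t : ℕ) (ht : t < cols.length), (cols[t] : ℕ) = t := fun t ht => by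
    simpa [ht, hlen ▸ ht] using congrArg (·[t]?) hcols
  suffices ∀ t, Antitone (sRun p M ((cols.map (Prod.mk i)).take t) s).2 ∧
      ∀ ht : t < cols.length, ColumnReady p i cols[t] (sRun p M ((cols.map (Prod.mk i)).take t) s)
    from (this t).1
  intro t
  induction t with
  | zero =>
    refine ⟨hθ, fun ht => ?_⟩
    rw [show cols[0] = 0 from Fin.ext (hval 0 ht)]
    exact columnReady_zero i _
  | succ t ih =>
    obtain ⟨ih_anti, ih_ready⟩ := ih
    by_cases ht : t < cols.length
    · have htake : (cols.map (Prod.mk i)).take (t + 1) =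
          (cols.map (Prod.mk i)).take t ++ [(i, cols[t])] := by
        simp [List.take_add_one, ht]
      rw [htake, sRun_append]
      refine ⟨antitone_sStep_s5 ih_anti (ih_ready ht), fun ht' => ?_⟩
      refine columnReady_sStep ih_anti (ih_ready ht) ?_
      rw [Fin.covBy_iff, hval t ht, hval (t + 1) ht', Nat.covBy_iff_add_one_eq]
    · have hdone : (cols.map (Prod.mk i)).take (t + 1) = (cols.map (Prod.mk i)).take t := by
        rw [List.take_of_length_le (by simp; omega), List.take_of_length_le (by simp; omega)]
      rw [hdone]
      exact ⟨ih_anti, fun ht' => absurd ht' (by omega)⟩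

theorem serganova_v2_theta_antitone_general (p M : ℕ)
    (s : SState M) (hs : s ∈ domA M) :
    (∀ k : ℕ, Antitone (sRun p M ((order2 M).take k) s).2) ∧
    Antitone (S2 p M s).2 := by
  have hprefix : ∀ k : ℕ, Antitone (sRun p M ((order2 M).take k) s).2 := fun k =>
    List.foldl_take_flatMap_invariant _ (fun s : SState M => Antitone s.2) _ _
      (fun i _ t s' hs' => by
        have hcols : (((List.finRange M).filter (· ≤ i)).map Fin.castSucc).map Fin.val =
            List.range (i + 1) := by
          rw [List.map_map]
          exact List.map_val_filter_le_finRange i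
        have hrow := antitone_sRun_row_take (p := p) i hcols hs' t
        rwa [List.map_map] at hrow)
      k s hs.2
  refine ⟨hprefix, ?_⟩
  simpa only [S2, List.take_length] using hprefix (order2 M).length

/-- At every intermediate stage of the Version 2 algorithm applied to a
dominant pair, the current `θ`-sequence is nonincreasing; in particular the `θ`-component
of `S₂(λ,θ)` is nonincreasing. -/
theorem serganova_v2_theta_antitone (p M : ℕ) (hp : p.Prime) (hM : 1 ≤ M)
    (s : SState M) (hs : s ∈ domA M) :
    (∀ k : ℕ, Antitone (sRun p M ((order2 M).take k) s).2) ∧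
    Antitone (S2 p M s).2 :=
  serganova_v2_theta_antitone_general p M s hs
end

section
/- Let p be a prime and M ≥ 1 an integer. Then T₁ ∘ S₁ is the identity map of ℤ^M × ℤ^{M+1}, and S₁ ∘ T₁ is the identity map of ℤ^M × ℤ^{M+1}; in particular S₁ is a bijection of ℤ^M × ℤ^{M+1} with inverse T₁. -/
open Function

/- A step changes `λ_i` and `θ_j` by opposite amounts, so it does not change the sum
`λ_i + θ_j` that it tests; hence the forward and backward steps at the same pair undo each other,
and running the backward steps in reverse order undoes a whole run. -/

theorem List.foldl_reverse_leftInverse {α β : Type*} {f g : β → α → α}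
    (h : ∀ b, LeftInverse (g b) (f b)) (l : List β) :
    LeftInverse (fun x => l.reverse.foldl (fun x b => g b x) x)
      (fun x => l.foldl (fun x b => f b x) x) := by
  induction l with
  | nil => exact fun _ => rfl
  | cons b l ih =>
    intro x
    simp only [List.reverse_cons, List.foldl_append, List.foldl_cons, List.foldl_nil]
    exact (congrArg (g b) (ih (f b x))).trans (h b x)

theorem tStep_leftInverse_sStep (p M : ℕ) (ij : Fin M × Fin (M + 1)) :
    LeftInverse (tStep p M ij) (sStep p M ij) := by
  intro s
  by_cases h : (p : ℤ) ∣ s.1 ij.1 + s.2 ij.2 <;> simp [sStep, tStep, h]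

theorem sStep_leftInverse_tStep (p M : ℕ) (ij : Fin M × Fin (M + 1)) :
    LeftInverse (sStep p M ij) (tStep p M ij) := by
  intro s
  by_cases h : (p : ℤ) ∣ s.1 ij.1 + s.2 ij.2 <;> simp [sStep, tStep, h]

theorem tRun_reverse_leftInverse_sRun (p M : ℕ) (l : List (Fin M × Fin (M + 1))) :
    LeftInverse (tRun p M l.reverse) (sRun p M l) :=
  List.foldl_reverse_leftInverse (tStep_leftInverse_sStep p M) l

theorem tRun_reverse_rightInverse_sRun (p M : ℕ) (l : List (Fin M × Fin (M + 1))) :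
    RightInverse (tRun p M l.reverse) (sRun p M l) := by
  have h := List.foldl_reverse_leftInverse (sStep_leftInverse_tStep p M) l.reverse
  rwa [List.reverse_reverse] at h

theorem serganova_inverse_general (p M : ℕ) :
    T1 p M ∘ S1 p M = id ∧ S1 p M ∘ T1 p M = id ∧ Function.Bijective (S1 p M) := by
  have hleft := tRun_reverse_leftInverse_sRun p M (order1 M)
  have hright := tRun_reverse_rightInverse_sRun p M (order1 M)
  exact ⟨hleft.comp_eq_id, hright.comp_eq_id, ⟨hleft.injective, hright.surjective⟩⟩

/-- `T₁ ∘ S₁ = id` and `S₁ ∘ T₁ = id` on `ℤ^M × ℤ^{M+1}`;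
in particular `S₁` is a bijection with inverse `T₁`. -/
theorem serganova_inverse (p M : ℕ) (hp : p.Prime) (hM : 1 ≤ M) :
    T1 p M ∘ S1 p M = id ∧ S1 p M ∘ T1 p M = id ∧ Function.Bijective (S1 p M) :=
  serganova_inverse_general p M
end

section
/- Let p be a prime and M ≥ 1 an integer, and let (λ̃,θ̃) ∈ 𝕄. Then at every intermediate stage of the inverse algorithm T₂ applied to (λ̃,θ̃), the current θ-sequence is nonincreasing; in particular the θ-component of T₂(λ̃,θ̃) satisfies θ_1 ≥ θ_2 ≥ … ≥ θ_{M+1}. -/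
open Function

/-!
`T₂` processes the pairs block by block, `(0,0); (1,1),(1,0); (2,2),(2,1),(2,0); …` (0-based).
A step at `(i, j)` lowers `θ_j` only when `p ∤ λ_i + θ_j`, so it keeps `θ` antitone as long as
`θ_j = θ_{j+1}` forces `p ∣ λ_i + θ_j` (`PlateauDvd`). This condition passes from `(i, j)` to
`(i, j - 1)`: either the step did nothing and `p ∣ λ_i + θ_j`, or it made `θ_j < θ_{j-1}`.
At the start of block `i` it is the condition defining `𝕄`, because the earlier blocks have
touched only `λ_{<i}` and `θ_{<i}`.
-/

theorem List.IsChain.foldl_take_invariant {α σ : Type*} {R : α → α → Prop}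
    {f : σ → α → σ} (Q : σ → Prop) (P : σ → α → Prop)
    (step : ∀ t a, Q t → P t a → Q (f t a))
    (next : ∀ t a b, R a b → Q t → P t a → P (f t a) b)
    {l : List α} (hl : l.IsChain R) {s : σ} (hQ : Q s) (hP : ∀ a ∈ l.head?, P s a) (k : ℕ) :
    Q ((l.take k).foldl f s) := by
  induction l generalizing s k with
  | nil => simpa using hQ
  | cons a l ih =>
    cases k with
    | zero => simpa using hQ
    | succ k =>
      have hPa : P s a := hP a rfl
      exact ih hl.tail (step s a hQ hPa) (fun b hb => next s a b (hl.rel_head? hb) hQ hPa) k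

theorem List.isChain_finRange (M : ℕ) :
    (List.finRange M).IsChain fun a b : Fin M => (a : ℕ) + 1 = b := by
  rw [List.isChain_iff_getElem]
  intro k hk
  simp

theorem List.filter_le_finRange {M : ℕ} (i : Fin M) :
    ((List.finRange M).filter fun j => j ≤ i) = (List.finRange (i + 1)).map (Fin.castLE i.isLt) :=
  ((List.pairwise_lt_finRange M).filter _).eq_of_mem_iff
    ((List.pairwise_lt_finRange _).map _ fun _ _ h => h) fun j => by
      simp only [List.mem_filter, List.mem_finRange, List.mem_map, true_and, decide_eq_true_eq]
      refine ⟨fun h => ⟨⟨j, Nat.lt_succ_of_le h⟩, rfl⟩, ?_⟩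
      rintro ⟨k, rfl⟩
      exact Nat.le_of_lt_succ k.isLt

theorem Antitone.update_castSucc_sub_one {n : ℕ} {f : Fin (n + 1) → ℤ} (hf : Antitone f)
    {j : Fin n} (hj : f j.succ < f j.castSucc) :
    Antitone (update f j.castSucc (f j.castSucc - 1)) := by
  intro a b hab
  simp only [update_apply]
  split_ifs with hb ha ha
  · omega
  · subst hb
    have := hf hab
    omega
  · subst ha
    have hlt : j.castSucc < b := lt_of_le_of_ne hab (Ne.symm hb)
    have := hf (Fin.castSucc_lt_iff_succ_le.mp hlt)
    omega
  · exact hf hab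

def revOrder2 (M : ℕ) : List (Fin M × Fin M) :=
  (List.finRange M).flatMap fun i : Fin M =>
    ((List.finRange (i + 1)).map fun j => (i, Fin.castLE i.isLt j)).reverse

theorem reverse_order2 (M : ℕ) :
    (order2 M).reverse = (revOrder2 M).map fun a => (a.1, a.2.castSucc) := by
  simp [order2, revOrder2, List.reverse_flatMap, List.map_flatMap, List.filter_le_finRange,
    Function.comp_def]

def IsNextPair {M : ℕ} (a b : Fin M × Fin M) : Prop :=
  (b.1 = a.1 ∧ (b.2 : ℕ) + 1 = a.2) ∨
    ((a.2 : ℕ) = 0 ∧ (b.1 : ℕ) = a.1 + 1 ∧ b.2 = b.1)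

theorem isChain_revOrder2 (M : ℕ) : (revOrder2 M).IsChain IsNextPair := by
  rw [revOrder2, List.flatMap_def, List.isChain_flatten (by simp)]
  refine ⟨?_, ?_⟩
  · simp only [List.mem_map, List.mem_finRange, true_and, forall_exists_index,
      forall_apply_eq_imp_iff, List.isChain_reverse, List.isChain_map]
    intro i
    exact (List.isChain_finRange _).imp fun a b h => Or.inl ⟨rfl, by simp [h]⟩
  · rw [List.isChain_map]
    refine (List.isChain_finRange M).imp fun i i' h => ?_
    simp only [List.getLast?_reverse, List.head?_reverse, List.head?_map, List.getLast?_map]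
    rw [List.finRange_succ (n := i), List.finRange_succ_last (n := i')]
    simp only [List.head?_cons, List.getLast?_concat, Option.map_some, Option.mem_def,
      Option.some_inj, forall_eq']
    exact Or.inr ⟨rfl, h.symm, Fin.ext rfl⟩

theorem eq_of_mem_head?_revOrder2 {M : ℕ} {a : Fin M × Fin M} (ha : a ∈ (revOrder2 M).head?) :
    a.2 = a.1 := by
  rw [revOrder2, List.head?_flatMap] at ha
  obtain ⟨i, -, hi⟩ := List.exists_of_findSome?_eq_some ha
  rw [List.head?_reverse, List.getLast?_map, List.finRange_succ_last] at hi
  simp only [List.getLast?_concat, Option.map_some, Option.some_inj] at hi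
  rw [← hi]
  rfl

section Step

variable {p M : ℕ} {t : SState M}

theorem tStep_fst_of_ne {i i' : Fin M} {j : Fin (M + 1)} (h : i' ≠ i) :
    (tStep p M (i, j) t).1 i' = t.1 i' := by
  unfold tStep
  split_ifs <;> simp [h]

theorem tStep_snd_of_ne {i : Fin M} {j j' : Fin (M + 1)} (h : j' ≠ j) :
    (tStep p M (i, j) t).2 j' = t.2 j' := by
  unfold tStep
  split_ifs <;> simp [h]

def PlateauDvd (p : ℕ) (t : SState M) (i j : Fin M) : Prop :=
  t.2 j.castSucc = t.2 j.succ → (p : ℤ) ∣ t.1 i + t.2 j.castSucc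

theorem antitone_tStep_snd {i j : Fin M} (ht : Antitone t.2) (h : PlateauDvd p t i j) :
    Antitone (tStep p M (i, j.castSucc) t).2 := by
  unfold tStep
  split_ifs with hd
  · exact ht
  · exact ht.update_castSucc_sub_one <|
      lt_of_le_of_ne (ht (Fin.castSucc_le_succ j)) fun he => hd (h he.symm)

theorem plateauDvd_tStep_of_succ_eq {i j j' : Fin M} (ht : Antitone t.2)
    (hj : j'.succ = j.castSucc) : PlateauDvd p (tStep p M (i, j.castSucc) t) i j' := by
  have hne : j'.castSucc ≠ j.castSucc := by
    intro he
    have := congrArg Fin.val he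
    have := congrArg Fin.val hj
    simp_all
  have hle : t.2 j.castSucc ≤ t.2 j'.castSucc := ht (hj ▸ Fin.castSucc_le_succ j')
  unfold tStep
  split_ifs with hd
  · intro he
    rwa [he, hj]
  · intro he
    simp only [update_apply, hne, hj, if_false, if_true] at he
    omega

theorem PlateauDvd.tStep_of_ne {i i' j j' : Fin M} (hi : i' ≠ i) (hj : j < j')
    (h : PlateauDvd p t i' j') : PlateauDvd p (tStep p M (i, j.castSucc) t) i' j' := by
  have hcs : j'.castSucc ≠ j.castSucc := (Fin.castSucc_lt_castSucc_iff.mpr hj).ne'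
  have hs : j'.succ ≠ j.castSucc := (Fin.castSucc_lt_succ_iff.mpr hj.le).ne'
  unfold PlateauDvd
  rwa [tStep_fst_of_ne hi, tStep_snd_of_ne hcs, tStep_snd_of_ne hs]

def ReadyFor (p : ℕ) (t : SState M) (a : Fin M × Fin M) : Prop :=
  a.2 ≤ a.1 ∧ PlateauDvd p t a.1 a.2 ∧ ∀ i, a.1 < i → PlateauDvd p t i i

theorem ReadyFor.tStep_of_isNextPair {a b : Fin M × Fin M} (ht : Antitone t.2)
    (h : ReadyFor p t a) (hab : IsNextPair a b) :
    ReadyFor p (tStep p M (a.1, a.2.castSucc) t) b := by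
  obtain ⟨hji, -, hlater⟩ := h
  have later : ∀ i, a.1 < i → PlateauDvd p (tStep p M (a.1, a.2.castSucc) t) i i :=
    fun i hi => (hlater i hi).tStep_of_ne hi.ne' (hji.trans_lt hi)
  rcases hab with ⟨hi, hj⟩ | ⟨-, hi, hj⟩
  · refine ⟨?_, ?_, hi ▸ later⟩
    · rw [hi, Fin.le_def]
      omega
    · rw [hi]
      exact plateauDvd_tStep_of_succ_eq ht (Fin.ext (by simp [hj]))
  · have hlt : a.1 < b.1 := by
      rw [Fin.lt_def]
      omega
    exact ⟨hj.le, hj ▸ later b.1 hlt, fun i hi => later i (hlt.trans hi)⟩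

theorem readyFor_of_mem_setM {s : SState M} (hs : s ∈ setM p M) {a : Fin M × Fin M}
    (ha : a.2 = a.1) : ReadyFor p s a :=
  ⟨ha.le, ha ▸ hs.2.2.2 a.1 a.1.isLt, fun i _ => hs.2.2.2 i i.isLt⟩

end Step

theorem serganova_inv2_theta_antitone_general (p M : ℕ)
    (s : SState M) (hs : s ∈ setM p M) :
    (∀ k : ℕ, Antitone (tRun p M ((order2 M).reverse.take k) s).2) ∧
    Antitone (T2 p M s).2 := by
  have prefixes : ∀ k : ℕ, Antitone (tRun p M ((order2 M).reverse.take k) s).2 := by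
    intro k
    rw [reverse_order2, ← List.map_take, tRun, List.foldl_map]
    exact (isChain_revOrder2 M).foldl_take_invariant (fun t : SState M => Antitone t.2)
      (ReadyFor p) (fun _ _ ht h => antitone_tStep_snd ht h.2.1)
      (fun _ _ _ hab ht h => h.tStep_of_isNextPair ht hab) hs.2.1
      (fun _ ha => readyFor_of_mem_setM hs (eq_of_mem_head?_revOrder2 ha)) k
  refine ⟨prefixes, ?_⟩
  simpa only [T2, List.take_length] using prefixes (order2 M).reverse.length

/-- At every intermediate stage of the inverse algorithm `T₂` applied
to an element of `𝕄`, the current `θ`-sequence is nonincreasing; in particular the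
`θ`-component of `T₂(λ̃,θ̃)` is nonincreasing. -/
theorem serganova_inv2_theta_antitone (p M : ℕ) (hp : p.Prime) (hM : 1 ≤ M)
    (s : SState M) (hs : s ∈ setM p M) :
    (∀ k : ℕ, Antitone (tRun p M ((order2 M).reverse.take k) s).2) ∧
    Antitone (T2 p M s).2 :=
  serganova_inv2_theta_antitone_general p M s hs
end
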